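/- Multiple robustness and product-form bias bound for the treated mean in Scenario 2 (Theorem 4 and Section 3.1, with q known): (a) For admissible nuisance candidates μ̃₁₁, μ̃₁₀, μ̃₀₀, τ̃, π̃, if one of the following holds P∘X⁻¹-a.e. — (i) μ̃₁₁/μ̃₁₀ = μ₁₁/μ₁₀ and μ̃₀₀ = μ₀₀; (ii) μ̃₁₁/μ̃₁₀ = μ₁₁/μ₁₀ and π̃ = π; (iii) μ̃₀₀ = μ₀₀, μ̃₁₀ = μ₁₀ and τ̃ = τ — then E[ H₂(μ̃₁₁, μ̃₁₀, μ̃₀₀, τ̃, π̃) ] = α₂. (b) There is a constant C, depending only on ε, M and P(S=0), such that for all admissible nuisance candidates: | E[ H₂(μ̃₁₁, μ̃₁₀, μ̃₀₀, τ̃, π̃) ] − α₂ | ≤ C·[ ‖μ̃₁₁/μ̃₁₀ − μ₁₁/μ₁₀‖·( ‖μ̃₀₀ − μ₀₀‖ + ‖μ̃₁₀ − μ₁₀‖ + ‖τ̃ − τ‖ ) + ‖μ̃₀₀ − μ₀₀‖·‖π̃ − π‖ ]. -/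

import Mathlib

open MeasureTheory

/-- `m` is a version of the conditional expectation `E[Z ∣ X; B]`. -/
def IsVersion {Ω E : Type*} [MeasurableSpace Ω] [MeasurableSpace E]
    (P : Measure Ω) (X : Ω → E) (Z : Ω → ℝ) (B : Set Ω) (m : E → ℝ) : Prop :=
  Measurable m ∧
    ∀ h : E → ℝ, Measurable h → (∃ C, ∀ x, |h x| ≤ C) →
      ∫ ω in B, Z ω * h (X ω) ∂P = ∫ ω in B, m (X ω) * h (X ω) ∂P

/-- Conditional mean `E[Z ∣ B]` of a real random variable given an event `B`. -/
noncomputable def condMean {Ω : Type*} [MeasurableSpace Ω]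
    (P : Measure Ω) (Z : Ω → ℝ) (B : Set Ω) : ℝ :=
  (∫ ω in B, Z ω ∂P) / (P B).toReal

/-- The norm `‖f‖ = (E[f(X)²])^{1/2}`. -/
noncomputable def normX {Ω E : Type*} [MeasurableSpace Ω]
    (P : Measure Ω) (X : Ω → E) (f : E → ℝ) : ℝ :=
  Real.sqrt (∫ ω, (f (X ω)) ^ 2 ∂P)

/-- Admissible nuisance candidates for Scenario 2 (with propensity candidate `p`). -/
def Admissible2 {Ω E : Type*} [MeasurableSpace Ω] [MeasurableSpace E]
    (P : Measure Ω) (X : Ω → E) (ε M : ℝ) (m11 m10 m00 t p : E → ℝ) : Prop :=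
  Measurable m11 ∧ Measurable m10 ∧ Measurable m00 ∧ Measurable t ∧ Measurable p ∧
    (∀ x, ε ≤ p x ∧ p x ≤ 1 - ε) ∧
    ∀ᵐ ω ∂P, ε ≤ |m10 (X ω)| ∧ |m11 (X ω)| ≤ M ∧ |m10 (X ω)| ≤ M ∧
      |m00 (X ω)| ≤ M ∧ 0 ≤ t (X ω) ∧ t (X ω) ≤ M

/-- The Scenario 2 uncentered estimating function `H₂`, with `κ = 1/P(S=0)`. -/
noncomputable def H2 {Ω E : Type*} [MeasurableSpace Ω]
    (P : Measure Ω) (X : Ω → E) (S A Y : Ω → ℝ) (q m11 m10 m00 t p : E → ℝ) :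
    Ω → ℝ := fun ω =>
  (P {ω' | S ω' = 0}).toReal⁻¹ *
    ((1 - S ω) * (m11 (X ω) / m10 (X ω)) *
        (m00 (X ω) + (1 - A ω) / p (X ω) * (Y ω - m00 (X ω))) +
      S ω * t (X ω) * (m00 (X ω) / m10 (X ω)) *
        (A ω / q (X ω) * (Y ω - m11 (X ω)) -
          (1 - A ω) / (1 - q (X ω)) * (m11 (X ω) / m10 (X ω)) * (Y ω - m10 (X ω))))

/-! Pointwise, the `H₂` integrand equals `κ · [(1 - S) (μ₁₁/μ₁₀) μ₀₀ + J + R]`. The residual `R` is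
a sum of six terms `w · (Z - m(X)) · h(X)`, where `w` is the indicator of an event `B` and `m` is a
version of `E[Z ∣ X; B]`, so `E[R] = 0`. The remainder `J` is a sum of four products of two
nuisance errors with bounded coefficients. Hence `E[H₂] - α₂ = κ E[J]`, which Cauchy–Schwarz
bounds by the product norms, and under each of (i)–(iii) every product in `J` has a vanishing
factor. -/

lemma abs_div_le_div_of_le {a b C ε : ℝ} (ha : |a| ≤ C) (hε : 0 < ε) (hb : ε ≤ |b|) :
    |a / b| ≤ C / ε := by
  rw [abs_div]
  exact div_le_div₀ ((abs_nonneg a).trans ha) ha hε hb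

lemma abs_le_one_of_mem_Icc {x ε : ℝ} (hε : 0 < ε) (h : ε ≤ x ∧ x ≤ 1 - ε) : |x| ≤ 1 :=
  abs_le.mpr ⟨by linarith [h.1], by linarith [h.2]⟩

lemma abs_one_sub_le_one {x : ℝ} (h : x = 0 ∨ x = 1) : |1 - x| ≤ 1 := by
  rcases h with h | h <;> simp [h]

/-- The right side groups into the target, the product remainder `H2Remainder` and the residuals
`w * (Z - m) * h` with `m` the regression of `Z` on `X` over `{w = 1}`; the factor `1 *` is the
weight of `Set.univ`. -/
lemma H2_integrand_decomposition (s a y m11 m10 m00 t p u11 u10 u00 pi g q : ℝ)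
    (hm10 : m10 ≠ 0) (hu10 : u10 ≠ 0) (hp : p ≠ 0) (hq : q ≠ 0) (hq1 : 1 - q ≠ 0)
    (hg : g ≠ 0) :
    (1 - s) * (m11 / m10) * (m00 + (1 - a) / p * (y - m00)) +
        s * t * (m00 / m10) * (a / q * (y - m11) - (1 - a) / (1 - q) * (m11 / m10) * (y - m10))
      = (1 - s) * (u11 / u10 * u00)
        + ((1 - s) * (m11 / m10 - u11 / u10) * (u00 - m00)
          + (1 - s) * (m11 / m10 - u11 / u10) * (m00 / m10) * (m10 - u10)
          + (1 - s) * (m11 / m10) * ((pi - p) / p) * (u00 - m00)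
          + g * (t - (1 - g) / g) * (m00 / m10) * u10 * (u11 / u10 - m11 / m10))
        + ((1 - s) * (1 - a) * (y - u00) * (m11 / m10 / p)
            + (1 - s) * ((1 - a) - pi) * (m11 / m10 / p * (u00 - m00))
          + (s * a * (y - u11) * (t * (m00 / m10) / q)
          + s * (1 - a) * (y - u10) * -(t * (m00 / m10) * (m11 / m10) / (1 - q))
          + s * (a - q) * (t * (m00 / m10) / q * (u11 - m11)
              + t * (m00 / m10) * (m11 / m10) / (1 - q) * (u10 - m10))
          + 1 * (s - g) * ((t + 1) * (m00 / m10) * u10 * (u11 / u10 - m11 / m10)))) := by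
  field_simp
  ring

lemma abs_H2_remainder_le {s g t p pi m11 m10 m00 u11 u10 u00 ε M : ℝ} (hε : 0 < ε) (hM : 0 ≤ M)
    (hs : s = 0 ∨ s = 1) (hg : |g| ≤ 1) (hm11 : |m11| ≤ M) (hm10 : ε ≤ |m10|) (hm00 : |m00| ≤ M)
    (hp : ε ≤ |p|) (hu10 : |u10| ≤ M) :
    |(1 - s) * (m11 / m10 - u11 / u10) * (u00 - m00)
        + (1 - s) * (m11 / m10 - u11 / u10) * (m00 / m10) * (m10 - u10)
        + (1 - s) * (m11 / m10) * ((pi - p) / p) * (u00 - m00)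
        + g * (t - (1 - g) / g) * (m00 / m10) * u10 * (u11 / u10 - m11 / m10)|
      ≤ (1 + M / ε + M / ε / ε + M / ε * M) *
        (|m11 / m10 - u11 / u10| * |m00 - u00| + |m11 / m10 - u11 / u10| * |m10 - u10|
          + |p - pi| * |m00 - u00| + |t - (1 - g) / g| * |m11 / m10 - u11 / u10|) := by
  set K := 1 + M / ε + M / ε / ε + M / ε * M
  have hs1 := abs_one_sub_le_one hs
  have hr : |m11 / m10| ≤ M / ε := abs_div_le_div_of_le hm11 hε hm10
  have hc : |m00 / m10| ≤ M / ε := abs_div_le_div_of_le hm00 hε hm10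
  have h₁ : 0 ≤ M / ε := by positivity
  have h₂ : 0 ≤ M / ε / ε := by positivity
  have h₃ : 0 ≤ M / ε * M := by positivity
  have b1 : |(1 - s) * (m11 / m10 - u11 / u10) * (u00 - m00)|
      ≤ K * (|m11 / m10 - u11 / u10| * |m00 - u00|) := by
    rw [abs_mul, abs_mul, abs_sub_comm u00, mul_assoc]
    gcongr
    linarith
  have b2 : |(1 - s) * (m11 / m10 - u11 / u10) * (m00 / m10) * (m10 - u10)|
      ≤ K * (|m11 / m10 - u11 / u10| * |m10 - u10|) := by
    calc _ = |1 - s| * |m00 / m10| * (|m11 / m10 - u11 / u10| * |m10 - u10|) := by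
          simp only [abs_mul]; ring
      _ ≤ 1 * (M / ε) * (|m11 / m10 - u11 / u10| * |m10 - u10|) := by gcongr
      _ ≤ K * (|m11 / m10 - u11 / u10| * |m10 - u10|) := by gcongr; linarith
  have b3 : |(1 - s) * (m11 / m10) * ((pi - p) / p) * (u00 - m00)|
      ≤ K * (|p - pi| * |m00 - u00|) := by
    calc _ = |1 - s| * |m11 / m10| / |p| * (|p - pi| * |m00 - u00|) := by
          rw [abs_mul, abs_mul, abs_mul, abs_div (pi - p), abs_sub_comm pi, abs_sub_comm u00]; ring
      _ ≤ 1 * (M / ε) / ε * (|p - pi| * |m00 - u00|) := by gcongr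
      _ ≤ K * (|p - pi| * |m00 - u00|) := by rw [one_mul]; gcongr; linarith
  have b4 : |g * (t - (1 - g) / g) * (m00 / m10) * u10 * (u11 / u10 - m11 / m10)|
      ≤ K * (|t - (1 - g) / g| * |m11 / m10 - u11 / u10|) := by
    calc _ = |g| * |m00 / m10| * |u10| * (|t - (1 - g) / g| * |m11 / m10 - u11 / u10|) := by
          rw [abs_mul, abs_mul, abs_mul, abs_mul, abs_sub_comm (u11 / u10)]; ring
      _ ≤ 1 * (M / ε) * M * (|t - (1 - g) / g| * |m11 / m10 - u11 / u10|) := by gcongr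
      _ ≤ K * (|t - (1 - g) / g| * |m11 / m10 - u11 / u10|) := by gcongr; linarith
  refine (abs_add_le _ _).trans <| (add_le_add ((abs_add_le _ _).trans <| add_le_add
    ((abs_add_le _ _).trans <| add_le_add b1 b2) b3) b4).trans_eq ?_
  ring

lemma indicator_setOf_eq_one {Ω : Type*} {S : Ω → ℝ} (hS : ∀ ω, S ω = 0 ∨ S ω = 1) :
    {ω | S ω = 1}.indicator 1 = S := by
  ext ω
  rcases hS ω with h | h <;> simp [Set.indicator, h]

lemma indicator_setOf_eq_zero {Ω : Type*} {S : Ω → ℝ} (hS : ∀ ω, S ω = 0 ∨ S ω = 1) :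
    {ω | S ω = 0}.indicator 1 = fun ω => 1 - S ω := by
  ext ω
  rcases hS ω with h | h <;> simp [Set.indicator, h]

lemma indicator_setOf_and_eq_mul {Ω : Type*} {S A u v : Ω → ℝ} {a b : ℝ}
    (hu : {ω | S ω = a}.indicator 1 = u) (hv : {ω | A ω = b}.indicator 1 = v) :
    {ω | S ω = a ∧ A ω = b}.indicator 1 = fun ω => u ω * v ω := by
  rw [show {ω | S ω = a ∧ A ω = b} = {ω | S ω = a} ∩ {ω | A ω = b} from rfl,
    Set.inter_indicator_one, hu, hv]
  rfl

section Integration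

variable {Ω : Type*} [MeasurableSpace Ω] {P : Measure Ω}

lemma memLp_top_of_ae_abs_le {f : Ω → ℝ} (hf : Measurable f) {C : ℝ}
    (h : ∀ᵐ ω ∂P, |f ω| ≤ C) : MemLp f ⊤ P :=
  memLp_top_of_bound hf.aestronglyMeasurable C (by simpa only [Real.norm_eq_abs] using h)

lemma memLp_top_inv_of_ae_le_abs {f : Ω → ℝ} (hf : Measurable f) {ε : ℝ} (hε : 0 < ε)
    (h : ∀ᵐ ω ∂P, ε ≤ |f ω|) : MemLp (fun ω => (f ω)⁻¹) ⊤ P :=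
  memLp_top_of_ae_abs_le hf.inv (h.mono fun _ hω => by rw [abs_inv]; exact inv_anti₀ hε hω)

lemma MeasureTheory.MemLp.mul_top {f g : Ω → ℝ} (hf : MemLp f ⊤ P) (hg : MemLp g ⊤ P) :
    MemLp (fun ω => f ω * g ω) ⊤ P :=
  hg.mul' hf

lemma MeasureTheory.MemLp.div_top {f g : Ω → ℝ} (hf : MemLp f ⊤ P)
    (hg : MemLp (fun ω => (g ω)⁻¹) ⊤ P) : MemLp (fun ω => f ω / g ω) ⊤ P := by
  simpa only [div_eq_mul_inv] using hf.mul_top hg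

lemma MeasureTheory.MemLp.exists_ae_abs_le_of_top {f : Ω → ℝ} (hf : MemLp f ⊤ P) :
    ∃ C, ∀ᵐ ω ∂P, |f ω| ≤ C := by
  obtain ⟨C, hC⟩ := eLpNormEssSup_lt_top_iff_isBoundedUnder.mp
    (by simpa only [eLpNorm_exponent_top] using hf.eLpNorm_lt_top)
  exact ⟨C, Filter.eventually_map.mp hC |>.mono fun ω hω => by
    rw [← Real.norm_eq_abs, ← coe_nnnorm]; exact NNReal.coe_le_coe.mpr hω⟩

lemma setIntegral_eq_integral_mul {B : Set Ω} (hB : MeasurableSet B) {w : Ω → ℝ}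
    (hw : B.indicator 1 = w) (f : Ω → ℝ) :
    ∫ ω in B, f ω ∂P = ∫ ω, w ω * f ω ∂P := by
  rw [← integral_indicator hB, ← hw]
  congr 1 with ω
  by_cases hω : ω ∈ B <;> simp [hω]

def IsCentered (P : Measure Ω) (f : Ω → ℝ) : Prop :=
  Integrable f P ∧ ∫ ω, f ω ∂P = 0

lemma IsCentered.add {f g : Ω → ℝ} (hf : IsCentered P f) (hg : IsCentered P g) :
    IsCentered P (fun ω => f ω + g ω) :=
  ⟨hf.1.add hg.1, by rw [integral_add hf.1 hg.1, hf.2, hg.2, add_zero]⟩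

variable {E : Type*} {X : Ω → E}

lemma integral_abs_mul_abs_le_normX_mul_normX {a b : E → ℝ}
    (ha : MemLp (fun ω => a (X ω)) 2 P) (hb : MemLp (fun ω => b (X ω)) 2 P) :
    ∫ ω, |a (X ω)| * |b (X ω)| ∂P ≤ normX P X a * normX P X b := by
  have hofReal : ENNReal.ofReal 2 = 2 := by norm_num
  have holder := integral_mul_norm_le_Lp_mul_Lq Real.HolderConjugate.two_two
    (hofReal ▸ ha) (hofReal ▸ hb)
  simpa only [normX, Real.norm_eq_abs, Real.rpow_two, sq_abs, ← Real.sqrt_eq_rpow] using holder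

lemma abs_integral_le_mul_sum_normX_mul_normX {ι : Type*} (s : Finset ι) {F : Ω → ℝ} {K : ℝ}
    (hK : 0 ≤ K) {a b : ι → E → ℝ} (ha : ∀ i ∈ s, MemLp (fun ω => a i (X ω)) 2 P)
    (hb : ∀ i ∈ s, MemLp (fun ω => b i (X ω)) 2 P)
    (hF : ∀ᵐ ω ∂P, |F ω| ≤ K * ∑ i ∈ s, |a i (X ω)| * |b i (X ω)|) :
    |∫ ω, F ω ∂P| ≤ K * ∑ i ∈ s, normX P X (a i) * normX P X (b i) := by
  have hab : ∀ i ∈ s, Integrable (fun ω => |a i (X ω)| * |b i (X ω)|) P := fun i hi =>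
    (ha i hi).norm.integrable_mul (hb i hi).norm
  calc |∫ ω, F ω ∂P| ≤ ∫ ω, |F ω| ∂P := abs_integral_le_integral_abs
    _ ≤ ∫ ω, K * ∑ i ∈ s, |a i (X ω)| * |b i (X ω)| ∂P :=
        integral_mono_of_nonneg (Filter.Eventually.of_forall fun _ => abs_nonneg _)
          ((integrable_finsetSum s hab).const_mul K) hF
    _ = K * ∑ i ∈ s, ∫ ω, |a i (X ω)| * |b i (X ω)| ∂P := by
        rw [integral_const_mul, integral_finsetSum s hab]
    _ ≤ K * ∑ i ∈ s, normX P X (a i) * normX P X (b i) := by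
        gcongr with i hi
        exact integral_abs_mul_abs_le_normX_mul_normX (ha i hi) (hb i hi)

variable [MeasurableSpace E]

lemma IsVersion.setIntegral_mul_eq {Z : Ω → ℝ} {B : Set Ω} {m : E → ℝ}
    (hv : IsVersion P X Z B m) {h : E → ℝ} (hh : Measurable h)
    (hhX : MemLp (fun ω => h (X ω)) ⊤ P) :
    ∫ ω in B, Z ω * h (X ω) ∂P = ∫ ω in B, m (X ω) * h (X ω) ∂P := by
  obtain ⟨C, hC⟩ := hhX.exists_ae_abs_le_of_top
  -- `h` clipped at an essential bound is a legitimate (everywhere bounded) test function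
  set h' : E → ℝ := fun x => max (-C) (min (h x) C)
  have hh' : ∀ᵐ ω ∂P, h' (X ω) = h (X ω) := hC.mono fun ω hω => by
    obtain ⟨h₁, h₂⟩ := abs_le.mp hω
    simp only [h', min_eq_left h₂, max_eq_right h₁]
  have key := hv.2 h' (measurable_const.max (hh.min measurable_const))
    ⟨|C|, fun x => abs_le.mpr ⟨(neg_le_neg (le_abs_self C)).trans (le_max_left _ _),
      max_le (neg_le_abs C) ((min_le_right _ _).trans (le_abs_self C))⟩⟩
  calc ∫ ω in B, Z ω * h (X ω) ∂P = ∫ ω in B, Z ω * h' (X ω) ∂P :=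
        integral_congr_ae (ae_restrict_of_ae (hh'.mono fun ω hω => by simp only [hω]))
    _ = ∫ ω in B, m (X ω) * h' (X ω) ∂P := key
    _ = ∫ ω in B, m (X ω) * h (X ω) ∂P :=
        integral_congr_ae (ae_restrict_of_ae (hh'.mono fun ω hω => by simp only [hω]))

lemma IsVersion.isCentered_mul_sub_mul {Z : Ω → ℝ} {B : Set Ω} {m : E → ℝ}
    (hv : IsVersion P X Z B m) (hB : MeasurableSet B) {w : Ω → ℝ} (hw : B.indicator 1 = w)
    (hZ : Integrable Z P) (hm : Integrable (fun ω => m (X ω)) P) {h : E → ℝ}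
    (hh : Measurable h) (hhX : MemLp (fun ω => h (X ω)) ⊤ P) :
    IsCentered P (fun ω => w ω * (Z ω - m (X ω)) * h (X ω)) := by
  have hZh : Integrable (fun ω => Z ω * h (X ω)) P := hZ.mul_of_top_left hhX
  have hmh : Integrable (fun ω => m (X ω) * h (X ω)) P := hm.mul_of_top_left hhX
  have e : (fun ω => w ω * (Z ω - m (X ω)) * h (X ω))
      = B.indicator (fun ω => Z ω * h (X ω) - m (X ω) * h (X ω)) := by
    ext ω
    rw [← hw]
    by_cases hω : ω ∈ B <;> simp [hω, sub_mul]
  rw [e]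
  refine ⟨(hZh.sub hmh).indicator hB, ?_⟩
  rw [integral_indicator hB, integral_sub hZh.integrableOn hmh.integrableOn,
    hv.setIntegral_mul_eq hh hhX, sub_self]

lemma IsVersion.ae_of_ae_on_zero {S : Ω → ℝ} {g : E → ℝ} (hg : IsVersion P X S Set.univ g)
    (hX : Measurable X) (hS01 : ∀ ω, S ω = 0 ∨ S ω = 1) (hS : Integrable S P)
    (hgX : Integrable (fun ω => g (X ω)) P) {ε : ℝ} (hε : 0 < ε)
    (hg1 : ∀ᵐ ω ∂P, g (X ω) ≤ 1 - ε) {p : E → Prop} (hp : MeasurableSet {x | p x})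
    (h : ∀ᵐ ω ∂P, S ω = 0 → p (X ω)) : ∀ᵐ ω ∂P, p (X ω) := by
  -- `(1 - g(X)) χ(X)` has the integral of `(1 - S) χ(X) = 0`, and `1 - g(X) ≥ ε`.
  set χ : E → ℝ := {x | p x}ᶜ.indicator 1
  have hχ : Measurable χ := measurable_one.indicator hp.compl
  have hχ01 : ∀ x, χ x = 0 ∨ χ x = 1 := fun x => by
    by_cases hx : p x <;> simp [χ, hx]
  have hc := hg.isCentered_mul_sub_mul MeasurableSet.univ (Set.indicator_univ _) hS hgX hχ
    (memLp_top_of_ae_abs_le (hχ.comp hX) (C := 1)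
      (Filter.Eventually.of_forall fun ω => by rcases hχ01 (X ω) with h | h <;> simp [h]))
  have e : (fun ω => (1 - g (X ω)) * χ (X ω)) =ᵐ[P]
      fun ω => (1 : Ω → ℝ) ω * (S ω - g (X ω)) * χ (X ω) := by
    filter_upwards [h] with ω hω
    rcases hS01 ω with h0 | h1
    · simp [χ, h0, hω h0]
    · simp [h1]
  have hnonneg : 0 ≤ᵐ[P] fun ω => (1 - g (X ω)) * χ (X ω) := by
    filter_upwards [hg1] with ω hω
    rcases hχ01 (X ω) with h | h <;> simp only [Pi.zero_apply, h] <;> linarith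
  have hzero := (integral_eq_zero_iff_of_nonneg_ae hnonneg (hc.1.congr e.symm)).mp
    ((integral_congr_ae e).trans hc.2)
  filter_upwards [hzero, hg1] with ω h0 hω
  by_contra hn
  simp only [χ, Pi.zero_apply, Set.indicator_of_mem (show X ω ∈ {x | p x}ᶜ from hn),
    Pi.one_apply, mul_one] at h0
  linarith

end Integration

section Scenario2

variable {Ω E : Type*} [MeasurableSpace Ω] [MeasurableSpace E] {P : Measure Ω} {X : Ω → E}
  {S A Y : Ω → ℝ} {μ11 μ10 μ00 π g q : E → ℝ} {ε M : ℝ} {m11 m10 m00 t p : E → ℝ}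

namespace Admissible2

variable (hc : Admissible2 P X ε M m11 m10 m00 t p) (hX : Measurable X)
include hc hX

lemma memLp_m11 : MemLp (fun ω => m11 (X ω)) ⊤ P :=
  memLp_top_of_ae_abs_le (hc.1.comp hX) (hc.2.2.2.2.2.2.mono fun _ h => h.2.1)

lemma memLp_m10 : MemLp (fun ω => m10 (X ω)) ⊤ P :=
  memLp_top_of_ae_abs_le (hc.2.1.comp hX) (hc.2.2.2.2.2.2.mono fun _ h => h.2.2.1)

lemma memLp_m00 : MemLp (fun ω => m00 (X ω)) ⊤ P :=
  memLp_top_of_ae_abs_le (hc.2.2.1.comp hX) (hc.2.2.2.2.2.2.mono fun _ h => h.2.2.2.1)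

lemma memLp_t : MemLp (fun ω => t (X ω)) ⊤ P :=
  memLp_top_of_ae_abs_le (hc.2.2.2.1.comp hX)
    (hc.2.2.2.2.2.2.mono fun _ h => abs_le.mpr ⟨by linarith [h.2.2.2.2.1], h.2.2.2.2.2⟩)

lemma memLp_p (hε : 0 < ε) : MemLp (fun ω => p (X ω)) ⊤ P :=
  memLp_top_of_ae_abs_le (hc.2.2.2.2.1.comp hX)
    (Filter.Eventually.of_forall fun ω => abs_le_one_of_mem_Icc hε (hc.2.2.2.2.2.1 (X ω)))

lemma memLp_inv_m10 (hε : 0 < ε) : MemLp (fun ω => (m10 (X ω))⁻¹) ⊤ P :=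
  memLp_top_inv_of_ae_le_abs (hc.2.1.comp hX) hε (hc.2.2.2.2.2.2.mono fun _ h => h.1)

lemma memLp_inv_p (hε : 0 < ε) : MemLp (fun ω => (p (X ω))⁻¹) ⊤ P :=
  memLp_top_inv_of_ae_le_abs (hc.2.2.2.2.1.comp hX) hε
    (Filter.Eventually.of_forall fun ω => (hc.2.2.2.2.2.1 (X ω)).1.trans (le_abs_self _))

end Admissible2

structure Scenario2Model (P : Measure Ω) (X : Ω → E) (S A Y : Ω → ℝ)
    (μ11 μ10 μ00 π g q : E → ℝ) (ε M : ℝ) : Prop where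
  measurable_X : Measurable X
  measurable_S : Measurable S
  measurable_A : Measurable A
  measurable_Y : Measurable Y
  S_eq_zero_or_one : ∀ ω, S ω = 0 ∨ S ω = 1
  A_eq_zero_or_one : ∀ ω, A ω = 0 ∨ A ω = 1
  isVersion_μ11 : IsVersion P X Y {ω | S ω = 1 ∧ A ω = 1} μ11
  isVersion_μ10 : IsVersion P X Y {ω | S ω = 1 ∧ A ω = 0} μ10
  isVersion_μ00 : IsVersion P X Y {ω | S ω = 0 ∧ A ω = 0} μ00
  isVersion_π : IsVersion P X (fun ω => 1 - A ω) {ω | S ω = 0} π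
  isVersion_g : IsVersion P X S Set.univ g
  isVersion_q : IsVersion P X A {ω | S ω = 1} q
  ε_pos : 0 < ε
  M_nonneg : 0 ≤ M
  abs_Y_le : ∀ᵐ ω ∂P, |Y ω| ≤ M
  abs_μ11_le : ∀ᵐ ω ∂P, |μ11 (X ω)| ≤ M
  abs_μ10_mem : ∀ᵐ ω ∂P, ε ≤ |μ10 (X ω)| ∧ |μ10 (X ω)| ≤ M
  abs_μ00_le : ∀ᵐ ω ∂P, |μ00 (X ω)| ≤ M
  g_mem : ∀ᵐ ω ∂P, ε ≤ g (X ω) ∧ g (X ω) ≤ 1 - ε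
  q_mem : ∀ᵐ ω ∂P, ε ≤ q (X ω) ∧ q (X ω) ≤ 1 - ε
  π_mem_of_S_eq_zero : ∀ᵐ ω ∂P, S ω = 0 → ε ≤ π (X ω) ∧ π (X ω) ≤ 1 - ε

noncomputable def H2Remainder (X : Ω → E) (S : Ω → ℝ) (μ11 μ10 μ00 π g m11 m10 m00 t p : E → ℝ)
    (ω : Ω) : ℝ :=
  (1 - S ω) * (m11 (X ω) / m10 (X ω) - μ11 (X ω) / μ10 (X ω)) * (μ00 (X ω) - m00 (X ω))
    + (1 - S ω) * (m11 (X ω) / m10 (X ω) - μ11 (X ω) / μ10 (X ω)) * (m00 (X ω) / m10 (X ω))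
      * (m10 (X ω) - μ10 (X ω))
    + (1 - S ω) * (m11 (X ω) / m10 (X ω)) * ((π (X ω) - p (X ω)) / p (X ω))
      * (μ00 (X ω) - m00 (X ω))
    + g (X ω) * (t (X ω) - (1 - g (X ω)) / g (X ω)) * (m00 (X ω) / m10 (X ω)) * μ10 (X ω)
      * (μ11 (X ω) / μ10 (X ω) - m11 (X ω) / m10 (X ω))

namespace Scenario2Model

variable (hm : Scenario2Model P X S A Y μ11 μ10 μ00 π g q ε M)
include hm

lemma measurableSet_S_eq (c : ℝ) : MeasurableSet {ω | S ω = c} :=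
  hm.measurable_S (measurableSet_singleton c)

lemma measurableSet_A_eq (c : ℝ) : MeasurableSet {ω | A ω = c} :=
  hm.measurable_A (measurableSet_singleton c)

lemma memLp_S : MemLp S ⊤ P :=
  memLp_top_of_ae_abs_le hm.measurable_S (C := 1) (Filter.Eventually.of_forall fun ω => by
    rcases hm.S_eq_zero_or_one ω with h | h <;> simp [h])

lemma memLp_A : MemLp A ⊤ P :=
  memLp_top_of_ae_abs_le hm.measurable_A (C := 1) (Filter.Eventually.of_forall fun ω => by
    rcases hm.A_eq_zero_or_one ω with h | h <;> simp [h])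

lemma memLp_Y : MemLp Y ⊤ P :=
  memLp_top_of_ae_abs_le hm.measurable_Y hm.abs_Y_le

lemma memLp_μ11 : MemLp (fun ω => μ11 (X ω)) ⊤ P :=
  memLp_top_of_ae_abs_le (hm.isVersion_μ11.1.comp hm.measurable_X) hm.abs_μ11_le

lemma memLp_μ10 : MemLp (fun ω => μ10 (X ω)) ⊤ P :=
  memLp_top_of_ae_abs_le (hm.isVersion_μ10.1.comp hm.measurable_X)
    (hm.abs_μ10_mem.mono fun _ h => h.2)

lemma memLp_inv_μ10 : MemLp (fun ω => (μ10 (X ω))⁻¹) ⊤ P :=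
  memLp_top_inv_of_ae_le_abs (hm.isVersion_μ10.1.comp hm.measurable_X) hm.ε_pos
    (hm.abs_μ10_mem.mono fun _ h => h.1)

lemma memLp_μ00 : MemLp (fun ω => μ00 (X ω)) ⊤ P :=
  memLp_top_of_ae_abs_le (hm.isVersion_μ00.1.comp hm.measurable_X) hm.abs_μ00_le

lemma memLp_g : MemLp (fun ω => g (X ω)) ⊤ P :=
  memLp_top_of_ae_abs_le (hm.isVersion_g.1.comp hm.measurable_X)
    (hm.g_mem.mono fun _ h => abs_le_one_of_mem_Icc hm.ε_pos h)

lemma memLp_inv_g : MemLp (fun ω => (g (X ω))⁻¹) ⊤ P :=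
  memLp_top_inv_of_ae_le_abs (hm.isVersion_g.1.comp hm.measurable_X) hm.ε_pos
    (hm.g_mem.mono fun _ h => h.1.trans (le_abs_self _))

lemma memLp_q : MemLp (fun ω => q (X ω)) ⊤ P :=
  memLp_top_of_ae_abs_le (hm.isVersion_q.1.comp hm.measurable_X)
    (hm.q_mem.mono fun _ h => abs_le_one_of_mem_Icc hm.ε_pos h)

lemma memLp_inv_q : MemLp (fun ω => (q (X ω))⁻¹) ⊤ P :=
  memLp_top_inv_of_ae_le_abs (hm.isVersion_q.1.comp hm.measurable_X) hm.ε_pos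
    (hm.q_mem.mono fun _ h => h.1.trans (le_abs_self _))

lemma memLp_inv_one_sub_q : MemLp (fun ω => (1 - q (X ω))⁻¹) ⊤ P :=
  memLp_top_inv_of_ae_le_abs (measurable_const.sub (hm.isVersion_q.1.comp hm.measurable_X))
    hm.ε_pos (hm.q_mem.mono fun _ h => by
      rw [abs_of_pos (by linarith [h.2, hm.ε_pos])]; linarith [h.2])

lemma π_mem [IsFiniteMeasure P] : ∀ᵐ ω ∂P, ε ≤ π (X ω) ∧ π (X ω) ≤ 1 - ε :=
  hm.isVersion_g.ae_of_ae_on_zero hm.measurable_X hm.S_eq_zero_or_one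
    (hm.memLp_S.integrable le_top) (hm.memLp_g.integrable le_top) hm.ε_pos
    (hm.g_mem.mono fun _ h => h.2)
    ((measurableSet_le measurable_const hm.isVersion_π.1).inter
      (measurableSet_le hm.isVersion_π.1 measurable_const))
    hm.π_mem_of_S_eq_zero

lemma memLp_π [IsFiniteMeasure P] : MemLp (fun ω => π (X ω)) ⊤ P :=
  memLp_top_of_ae_abs_le (hm.isVersion_π.1.comp hm.measurable_X)
    (hm.π_mem.mono fun _ h => abs_le_one_of_mem_Icc hm.ε_pos h)

lemma isCentered_target_residual [IsFiniteMeasure P]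
    (hc : Admissible2 P X ε M m11 m10 m00 t p) :
    IsCentered P fun ω =>
      (1 - S ω) * (1 - A ω) * (Y ω - μ00 (X ω)) * (m11 (X ω) / m10 (X ω) / p (X ω))
      + (1 - S ω) * ((1 - A ω) - π (X ω)) *
          (m11 (X ω) / m10 (X ω) / p (X ω) * (μ00 (X ω) - m00 (X ω))) := by
  have hX := hm.measurable_X
  have ratio := (hc.memLp_m11 hX).div_top (hc.memLp_inv_m10 hX hm.ε_pos)
  have Lpi := hc.memLp_inv_p hX hm.ε_pos
  have L00 := hc.memLp_m00 hX
  obtain ⟨hm11, hm10, hm00, -, hp, -, -⟩ := hc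
  have hμ00 := hm.isVersion_μ00.1
  have hS01 := hm.S_eq_zero_or_one
  refine .add ?_ ?_
  · exact hm.isVersion_μ00.isCentered_mul_sub_mul
      ((hm.measurableSet_S_eq 0).inter (hm.measurableSet_A_eq 0))
      (indicator_setOf_and_eq_mul (indicator_setOf_eq_zero hS01)
        (indicator_setOf_eq_zero hm.A_eq_zero_or_one))
      (hm.memLp_Y.integrable le_top) (hm.memLp_μ00.integrable le_top)
      (h := fun x => m11 x / m10 x / p x) (by fun_prop) (ratio.div_top Lpi)
  · exact hm.isVersion_π.isCentered_mul_sub_mul (hm.measurableSet_S_eq 0)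
      (indicator_setOf_eq_zero hS01) ((integrable_const 1).sub (hm.memLp_A.integrable le_top))
      (hm.memLp_π.integrable le_top) (h := fun x => m11 x / m10 x / p x * (μ00 x - m00 x))
      (by fun_prop) ((ratio.div_top Lpi).mul_top (hm.memLp_μ00.sub L00))

lemma isCentered_source_residual [IsFiniteMeasure P]
    (hc : Admissible2 P X ε M m11 m10 m00 t p) :
    IsCentered P fun ω =>
      S ω * A ω * (Y ω - μ11 (X ω)) * (t (X ω) * (m00 (X ω) / m10 (X ω)) / q (X ω))
      + S ω * (1 - A ω) * (Y ω - μ10 (X ω)) *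
          -(t (X ω) * (m00 (X ω) / m10 (X ω)) * (m11 (X ω) / m10 (X ω)) / (1 - q (X ω)))
      + S ω * (A ω - q (X ω)) *
          (t (X ω) * (m00 (X ω) / m10 (X ω)) / q (X ω) * (μ11 (X ω) - m11 (X ω))
            + t (X ω) * (m00 (X ω) / m10 (X ω)) * (m11 (X ω) / m10 (X ω)) / (1 - q (X ω))
              * (μ10 (X ω) - m10 (X ω)))
      + 1 * (S ω - g (X ω)) * ((t (X ω) + 1) * (m00 (X ω) / m10 (X ω)) * μ10 (X ω)
          * (μ11 (X ω) / μ10 (X ω) - m11 (X ω) / m10 (X ω))) := by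
  have hX := hm.measurable_X
  have L11 := hc.memLp_m11 hX
  have L10 := hc.memLp_m10 hX
  have L00 := hc.memLp_m00 hX
  have Lt := hc.memLp_t hX
  have L10i := hc.memLp_inv_m10 hX hm.ε_pos
  have ratio := L11.div_top L10i
  have coef := Lt.mul_top (L00.div_top L10i)
  obtain ⟨hm11, hm10, hm00, ht, -, -, -⟩ := hc
  have hμ11 := hm.isVersion_μ11.1
  have hμ10 := hm.isVersion_μ10.1
  have hq := hm.isVersion_q.1
  have hS01 := hm.S_eq_zero_or_one
  have hA01 := hm.A_eq_zero_or_one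
  refine .add (.add (.add ?_ ?_) ?_) ?_
  · exact hm.isVersion_μ11.isCentered_mul_sub_mul
      ((hm.measurableSet_S_eq 1).inter (hm.measurableSet_A_eq 1))
      (indicator_setOf_and_eq_mul (indicator_setOf_eq_one hS01) (indicator_setOf_eq_one hA01))
      (hm.memLp_Y.integrable le_top) (hm.memLp_μ11.integrable le_top)
      (h := fun x => t x * (m00 x / m10 x) / q x) (by fun_prop) (coef.div_top hm.memLp_inv_q)
  · exact hm.isVersion_μ10.isCentered_mul_sub_mul
      ((hm.measurableSet_S_eq 1).inter (hm.measurableSet_A_eq 0))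
      (indicator_setOf_and_eq_mul (indicator_setOf_eq_one hS01) (indicator_setOf_eq_zero hA01))
      (hm.memLp_Y.integrable le_top) (hm.memLp_μ10.integrable le_top)
      (h := fun x => -(t x * (m00 x / m10 x) * (m11 x / m10 x) / (1 - q x))) (by fun_prop)
      ((coef.mul_top ratio).div_top hm.memLp_inv_one_sub_q).neg
  · exact hm.isVersion_q.isCentered_mul_sub_mul (hm.measurableSet_S_eq 1)
      (indicator_setOf_eq_one hS01) (hm.memLp_A.integrable le_top)
      (hm.memLp_q.integrable le_top)
      (h := fun x => t x * (m00 x / m10 x) / q x * (μ11 x - m11 x)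
        + t x * (m00 x / m10 x) * (m11 x / m10 x) / (1 - q x) * (μ10 x - m10 x))
      (by fun_prop) (((coef.div_top hm.memLp_inv_q).mul_top (hm.memLp_μ11.sub L11)).add
        (((coef.mul_top ratio).div_top hm.memLp_inv_one_sub_q).mul_top (hm.memLp_μ10.sub L10)))
  · exact hm.isVersion_g.isCentered_mul_sub_mul MeasurableSet.univ (Set.indicator_univ 1)
      (hm.memLp_S.integrable le_top) (hm.memLp_g.integrable le_top)
      (h := fun x => (t x + 1) * (m00 x / m10 x) * μ10 x * (μ11 x / μ10 x - m11 x / m10 x))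
      (by fun_prop) ((((Lt.add (memLp_const 1)).mul_top (L00.div_top L10i)).mul_top
        hm.memLp_μ10).mul_top ((hm.memLp_μ11.div_top hm.memLp_inv_μ10).sub ratio))

lemma integrable_H2Remainder [IsFiniteMeasure P] (hc : Admissible2 P X ε M m11 m10 m00 t p) :
    Integrable (H2Remainder X S μ11 μ10 μ00 π g m11 m10 m00 t p) P := by
  have hX := hm.measurable_X
  have hε := hm.ε_pos
  have L1S := (memLp_const 1).sub hm.memLp_S
  have ratio := (hc.memLp_m11 hX).div_top (hc.memLp_inv_m10 hX hε)
  have ρ := hm.memLp_μ11.div_top hm.memLp_inv_μ10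
  have coef := (hc.memLp_m00 hX).div_top (hc.memLp_inv_m10 hX hε)
  have d00 := hm.memLp_μ00.sub (hc.memLp_m00 hX)
  have τ := ((memLp_const 1).sub hm.memLp_g).div_top hm.memLp_inv_g
  refine MemLp.integrable le_top (((?_ : MemLp _ ⊤ P).add ?_).add ?_ |>.add ?_)
  · exact (L1S.mul_top (ratio.sub ρ)).mul_top d00
  · exact ((L1S.mul_top (ratio.sub ρ)).mul_top coef).mul_top ((hc.memLp_m10 hX).sub hm.memLp_μ10)
  · exact ((L1S.mul_top ratio).mul_top
      ((hm.memLp_π.sub (hc.memLp_p hX hε)).div_top (hc.memLp_inv_p hX hε))).mul_top d00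
  · exact (((hm.memLp_g.mul_top ((hc.memLp_t hX).sub τ)).mul_top coef).mul_top
      hm.memLp_μ10).mul_top (ρ.sub ratio)

lemma ae_eq_H2 [IsFiniteMeasure P] (hc : Admissible2 P X ε M m11 m10 m00 t p) :
    ∃ R : Ω → ℝ, IsCentered P R ∧ H2 P X S A Y q m11 m10 m00 t p =ᵐ[P] fun ω =>
      (P {ω | S ω = 0}).toReal⁻¹ * ((1 - S ω) * (μ11 (X ω) / μ10 (X ω) * μ00 (X ω))
        + H2Remainder X S μ11 μ10 μ00 π g m11 m10 m00 t p ω + R ω) := by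
  have hε := hm.ε_pos
  refine ⟨_, (hm.isCentered_target_residual hc).add (hm.isCentered_source_residual hc),
    ?_⟩
  obtain ⟨-, -, -, -, -, hp, hbd⟩ := hc
  filter_upwards [hbd, hm.abs_μ10_mem, hm.g_mem, hm.q_mem] with ω hω hμ hg hq
  exact congrArg _ (H2_integrand_decomposition (S ω) (A ω) (Y ω) (m11 (X ω)) (m10 (X ω))
    (m00 (X ω)) (t (X ω)) (p (X ω)) (μ11 (X ω)) (μ10 (X ω)) (μ00 (X ω)) (π (X ω)) (g (X ω))
    (q (X ω)) (abs_pos.mp (hε.trans_le hω.1)) (abs_pos.mp (hε.trans_le hμ.1))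
    (hε.trans_le (hp (X ω)).1).ne' (hε.trans_le hq.1).ne'
    (show (0 : ℝ) < 1 - q (X ω) by linarith [hq.2]).ne' (hε.trans_le hg.1).ne')

theorem integral_H2_sub_condMean [IsFiniteMeasure P] (hc : Admissible2 P X ε M m11 m10 m00 t p) :
    (∫ ω, H2 P X S A Y q m11 m10 m00 t p ω ∂P) -
        condMean P (fun ω => μ11 (X ω) / μ10 (X ω) * μ00 (X ω)) {ω | S ω = 0}
      = (P {ω | S ω = 0}).toReal⁻¹ *
        ∫ ω, H2Remainder X S μ11 μ10 μ00 π g m11 m10 m00 t p ω ∂P := by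
  obtain ⟨R, hR, hH2⟩ := hm.ae_eq_H2 hc
  have hT0 : Integrable (fun ω => (1 - S ω) * (μ11 (X ω) / μ10 (X ω) * μ00 (X ω))) P :=
    (((memLp_const 1).sub hm.memLp_S).mul_top
      ((hm.memLp_μ11.div_top hm.memLp_inv_μ10).mul_top hm.memLp_μ00)).integrable le_top
  have hJ := hm.integrable_H2Remainder hc
  have hT0J : Integrable (fun ω => (1 - S ω) * (μ11 (X ω) / μ10 (X ω) * μ00 (X ω))
      + H2Remainder X S μ11 μ10 μ00 π g m11 m10 m00 t p ω) P := hT0.add hJ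
  rw [integral_congr_ae hH2, integral_const_mul, integral_add hT0J hR.1,
    integral_add hT0 hJ, hR.2, condMean, setIntegral_eq_integral_mul
      (hm.measurableSet_S_eq 0) (indicator_setOf_eq_zero hm.S_eq_zero_or_one)]
  ring

theorem abs_integral_H2Remainder_le [IsFiniteMeasure P]
    (hc : Admissible2 P X ε M m11 m10 m00 t p) :
    |∫ ω, H2Remainder X S μ11 μ10 μ00 π g m11 m10 m00 t p ω ∂P|
      ≤ (1 + M / ε + M / ε / ε + M / ε * M) *
        (normX P X (fun x => m11 x / m10 x - μ11 x / μ10 x) *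
            (normX P X (fun x => m00 x - μ00 x) + normX P X (fun x => m10 x - μ10 x) +
              normX P X (fun x => t x - (1 - g x) / g x)) +
          normX P X (fun x => m00 x - μ00 x) * normX P X (fun x => p x - π x)) := by
  have hX := hm.measurable_X
  have hε := hm.ε_pos
  have hM := hm.M_nonneg
  set r : E → ℝ := fun x => m11 x / m10 x - μ11 x / μ10 x
  set d00 : E → ℝ := fun x => m00 x - μ00 x
  set d10 : E → ℝ := fun x => m10 x - μ10 x
  set dt : E → ℝ := fun x => t x - (1 - g x) / g x
  set dp : E → ℝ := fun x => p x - π x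
  have hr : MemLp (fun ω => r (X ω)) 2 P :=
    (((hc.memLp_m11 hX).div_top (hc.memLp_inv_m10 hX hε)).sub
      (hm.memLp_μ11.div_top hm.memLp_inv_μ10)).mono_exponent le_top
  have hd00 : MemLp (fun ω => d00 (X ω)) 2 P :=
    ((hc.memLp_m00 hX).sub hm.memLp_μ00).mono_exponent le_top
  have hd10 : MemLp (fun ω => d10 (X ω)) 2 P :=
    ((hc.memLp_m10 hX).sub hm.memLp_μ10).mono_exponent le_top
  have hdt : MemLp (fun ω => dt (X ω)) 2 P :=
    ((hc.memLp_t hX).sub (((memLp_const 1).sub hm.memLp_g).div_top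
      hm.memLp_inv_g)).mono_exponent le_top
  have hdp : MemLp (fun ω => dp (X ω)) 2 P :=
    ((hc.memLp_p hX hε).sub hm.memLp_π).mono_exponent le_top
  have key := abs_integral_le_mul_sum_normX_mul_normX (X := X) (Finset.univ : Finset (Fin 4))
    (F := H2Remainder X S μ11 μ10 μ00 π g m11 m10 m00 t p)
    (K := 1 + M / ε + M / ε / ε + M / ε * M) (by positivity)
    (a := ![r, r, dp, dt]) (b := ![d00, d10, d00, r])
    (by intro i _; fin_cases i <;> assumption) (by intro i _; fin_cases i <;> assumption) (by
      obtain ⟨-, -, -, -, -, hp, hbd⟩ := hc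
      filter_upwards [hbd, hm.abs_μ10_mem, hm.g_mem] with ω hω hμ hg
      simp only [Fin.sum_univ_four, Matrix.cons_val_zero, Matrix.cons_val_one, Matrix.cons_val_two,
        Matrix.cons_val_three, Matrix.tail_cons, Matrix.head_cons]
      exact abs_H2_remainder_le hε hM (hm.S_eq_zero_or_one ω) (abs_le_one_of_mem_Icc hε hg)
        hω.2.1 hω.1 hω.2.2.2.1 ((hp (X ω)).1.trans (le_abs_self _)) hμ.2)
  simp only [Fin.sum_univ_four, Matrix.cons_val_zero, Matrix.cons_val_one, Matrix.cons_val_two,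
    Matrix.cons_val_three, Matrix.tail_cons, Matrix.head_cons] at key
  exact key.trans_eq (by ring)

theorem abs_integral_H2_sub_condMean_le [IsFiniteMeasure P]
    (hc : Admissible2 P X ε M m11 m10 m00 t p) :
    |(∫ ω, H2 P X S A Y q m11 m10 m00 t p ω ∂P) -
        condMean P (fun ω => μ11 (X ω) / μ10 (X ω) * μ00 (X ω)) {ω | S ω = 0}|
      ≤ (P {ω | S ω = 0}).toReal⁻¹ * (1 + M / ε + M / ε / ε + M / ε * M) *
        (normX P X (fun x => m11 x / m10 x - μ11 x / μ10 x) *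
            (normX P X (fun x => m00 x - μ00 x) + normX P X (fun x => m10 x - μ10 x) +
              normX P X (fun x => t x - (1 - g x) / g x)) +
          normX P X (fun x => m00 x - μ00 x) * normX P X (fun x => p x - π x)) := by
  rw [hm.integral_H2_sub_condMean hc, abs_mul, abs_of_nonneg (by positivity), mul_assoc]
  exact mul_le_mul_of_nonneg_left (hm.abs_integral_H2Remainder_le hc) (by positivity)

end Scenario2Model

end Scenario2

theorem H2_multiple_robustness_and_bias_bound_general
    {Ω E : Type*} [MeasurableSpace Ω] [MeasurableSpace E]
    (P : Measure Ω) [IsProbabilityMeasure P]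
    (X : Ω → E) (S A Y : Ω → ℝ)
    (hX : Measurable X) (hS : Measurable S) (hA : Measurable A) (hY : Measurable Y)
    (hS01 : ∀ ω, S ω = 0 ∨ S ω = 1) (hA01 : ∀ ω, A ω = 0 ∨ A ω = 1)
    (μ11 μ10 μ00 π g q : E → ℝ)
    (hμ11 : IsVersion P X Y {ω | S ω = 1 ∧ A ω = 1} μ11)
    (hμ10 : IsVersion P X Y {ω | S ω = 1 ∧ A ω = 0} μ10)
    (hμ00 : IsVersion P X Y {ω | S ω = 0 ∧ A ω = 0} μ00)
    (hπ : IsVersion P X (fun ω => 1 - A ω) {ω | S ω = 0} π)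
    (hg : IsVersion P X S Set.univ g)
    (hq : IsVersion P X A {ω | S ω = 1} q)
    (ε M : ℝ) (hε0 : 0 < ε) (hM : 1 ≤ M)
    (hbd : ∀ᵐ ω ∂P,
      ε ≤ g (X ω) ∧ g (X ω) ≤ 1 - ε ∧ ε ≤ q (X ω) ∧ q (X ω) ≤ 1 - ε ∧
      ε ≤ |μ10 (X ω)| ∧ |μ11 (X ω)| ≤ M ∧ |μ10 (X ω)| ≤ M ∧ |μ00 (X ω)| ≤ M ∧
      |Y ω| ≤ M ∧ (1 - g (X ω)) / g (X ω) ≤ M)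
    (hπbd : ∀ᵐ ω ∂P, S ω = 0 → ε ≤ π (X ω) ∧ π (X ω) ≤ 1 - ε) :
    -- (a) model multiple robustness
    (∀ m11 m10 m00 t p : E → ℝ, Admissible2 P X ε M m11 m10 m00 t p →
      ((∀ᵐ ω ∂P, m11 (X ω) / m10 (X ω) = μ11 (X ω) / μ10 (X ω) ∧
          m00 (X ω) = μ00 (X ω)) ∨
        (∀ᵐ ω ∂P, m11 (X ω) / m10 (X ω) = μ11 (X ω) / μ10 (X ω) ∧
          p (X ω) = π (X ω)) ∨
        (∀ᵐ ω ∂P, m00 (X ω) = μ00 (X ω) ∧ m10 (X ω) = μ10 (X ω) ∧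
          t (X ω) = (1 - g (X ω)) / g (X ω))) →
      ∫ ω, H2 P X S A Y q m11 m10 m00 t p ω ∂P
        = condMean P (fun ω => μ11 (X ω) / μ10 (X ω) * μ00 (X ω)) {ω | S ω = 0}) ∧
    -- (b) product-form bias bound
    (∃ C : ℝ, ∀ m11 m10 m00 t p : E → ℝ, Admissible2 P X ε M m11 m10 m00 t p →
      |(∫ ω, H2 P X S A Y q m11 m10 m00 t p ω ∂P) -
          condMean P (fun ω => μ11 (X ω) / μ10 (X ω) * μ00 (X ω)) {ω | S ω = 0}|
        ≤ C * (normX P X (fun x => m11 x / m10 x - μ11 x / μ10 x) *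
              (normX P X (fun x => m00 x - μ00 x) +
                normX P X (fun x => m10 x - μ10 x) +
                normX P X (fun x => t x - (1 - g x) / g x)) +
            normX P X (fun x => m00 x - μ00 x) *
              normX P X (fun x => p x - π x))) := by
  have hm : Scenario2Model P X S A Y μ11 μ10 μ00 π g q ε M :=
    ⟨hX, hS, hA, hY, hS01, hA01, hμ11, hμ10, hμ00, hπ, hg, hq, hε0, zero_le_one.trans hM,
      hbd.mono fun _ h => h.2.2.2.2.2.2.2.2.1, hbd.mono fun _ h => h.2.2.2.2.2.1,
      hbd.mono fun _ h => ⟨h.2.2.2.2.1, h.2.2.2.2.2.2.1⟩, hbd.mono fun _ h => h.2.2.2.2.2.2.2.1,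
      hbd.mono fun _ h => ⟨h.1, h.2.1⟩, hbd.mono fun _ h => ⟨h.2.2.1, h.2.2.2.1⟩, hπbd⟩
  refine ⟨fun m11 m10 m00 t p hc hcase => ?_, ⟨_, fun m11 m10 m00 t p hc =>
    hm.abs_integral_H2_sub_condMean_le hc⟩⟩
  refine sub_eq_zero.mp ((hm.integral_H2_sub_condMean hc).trans ?_)
  rw [integral_eq_zero_of_ae, mul_zero]
  rcases hcase with h | h | h <;> filter_upwards [h] with ω hω <;> simp [H2Remainder, hω]

/-- Multiple robustness and product-form bias bound for the treated mean in Scenario 2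
(Theorem 4 and Section 3.1, with `q` known, `τ = (1−g)/g`):
(a) if one of (i) `μ̃₁₁/μ̃₁₀ = μ₁₁/μ₁₀` and `μ̃₀₀ = μ₀₀`; (ii) `μ̃₁₁/μ̃₁₀ = μ₁₁/μ₁₀` and
`π̃ = π`; (iii) `μ̃₀₀ = μ₀₀`, `μ̃₁₀ = μ₁₀` and `τ̃ = τ` holds a.e., then
`E[H₂(μ̃₁₁,μ̃₁₀,μ̃₀₀,τ̃,π̃)] = α₂`;
(b) there is a constant `C` (depending only on `ε`, `M`, `P(S=0)`) with
`|E[H₂] − α₂| ≤ C·[‖μ̃₁₁/μ̃₁₀ − μ₁₁/μ₁₀‖·(‖μ̃₀₀ − μ₀₀‖ + ‖μ̃₁₀ − μ₁₀‖ + ‖τ̃ − τ‖)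
                 + ‖μ̃₀₀ − μ₀₀‖·‖π̃ − π‖]`. -/
theorem H2_multiple_robustness_and_bias_bound
    {Ω E : Type*} [MeasurableSpace Ω] [MeasurableSpace E]
    (P : Measure Ω) [IsProbabilityMeasure P]
    (X : Ω → E) (S A Y : Ω → ℝ)
    (hX : Measurable X) (hS : Measurable S) (hA : Measurable A) (hY : Measurable Y)
    (hS01 : ∀ ω, S ω = 0 ∨ S ω = 1) (hA01 : ∀ ω, A ω = 0 ∨ A ω = 1)
    (hPS0 : 0 < P {ω | S ω = 0}) (hPS0A0 : 0 < P {ω | S ω = 0 ∧ A ω = 0})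
    (hPS1A1 : 0 < P {ω | S ω = 1 ∧ A ω = 1})
    (hPS1A0 : 0 < P {ω | S ω = 1 ∧ A ω = 0})
    (μ11 μ10 μ00 π g q : E → ℝ)
    (hμ11 : IsVersion P X Y {ω | S ω = 1 ∧ A ω = 1} μ11)
    (hμ10 : IsVersion P X Y {ω | S ω = 1 ∧ A ω = 0} μ10)
    (hμ00 : IsVersion P X Y {ω | S ω = 0 ∧ A ω = 0} μ00)
    (hπ : IsVersion P X (fun ω => 1 - A ω) {ω | S ω = 0} π)
    (hg : IsVersion P X S Set.univ g)
    (hq : IsVersion P X A {ω | S ω = 1} q)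
    (ε M : ℝ) (hε0 : 0 < ε) (hε1 : ε < 1) (hM : 1 ≤ M)
    (hbd : ∀ᵐ ω ∂P,
      ε ≤ g (X ω) ∧ g (X ω) ≤ 1 - ε ∧ ε ≤ q (X ω) ∧ q (X ω) ≤ 1 - ε ∧
      ε ≤ |μ10 (X ω)| ∧ |μ11 (X ω)| ≤ M ∧ |μ10 (X ω)| ≤ M ∧ |μ00 (X ω)| ≤ M ∧
      |Y ω| ≤ M ∧ (1 - g (X ω)) / g (X ω) ≤ M)
    (hπbd : ∀ᵐ ω ∂P, S ω = 0 → ε ≤ π (X ω) ∧ π (X ω) ≤ 1 - ε) :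
    -- (a) model multiple robustness
    (∀ m11 m10 m00 t p : E → ℝ, Admissible2 P X ε M m11 m10 m00 t p →
      ((∀ᵐ ω ∂P, m11 (X ω) / m10 (X ω) = μ11 (X ω) / μ10 (X ω) ∧
          m00 (X ω) = μ00 (X ω)) ∨
        (∀ᵐ ω ∂P, m11 (X ω) / m10 (X ω) = μ11 (X ω) / μ10 (X ω) ∧
          p (X ω) = π (X ω)) ∨
        (∀ᵐ ω ∂P, m00 (X ω) = μ00 (X ω) ∧ m10 (X ω) = μ10 (X ω) ∧
          t (X ω) = (1 - g (X ω)) / g (X ω))) →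
      ∫ ω, H2 P X S A Y q m11 m10 m00 t p ω ∂P
        = condMean P (fun ω => μ11 (X ω) / μ10 (X ω) * μ00 (X ω)) {ω | S ω = 0}) ∧
    -- (b) product-form bias bound
    (∃ C : ℝ, ∀ m11 m10 m00 t p : E → ℝ, Admissible2 P X ε M m11 m10 m00 t p →
      |(∫ ω, H2 P X S A Y q m11 m10 m00 t p ω ∂P) -
          condMean P (fun ω => μ11 (X ω) / μ10 (X ω) * μ00 (X ω)) {ω | S ω = 0}|
        ≤ C * (normX P X (fun x => m11 x / m10 x - μ11 x / μ10 x) *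
              (normX P X (fun x => m00 x - μ00 x) +
                normX P X (fun x => m10 x - μ10 x) +
                normX P X (fun x => t x - (1 - g x) / g x)) +
            normX P X (fun x => m00 x - μ00 x) *
              normX P X (fun x => p x - π x))) :=
  H2_multiple_robustness_and_bias_bound_general P X S A Y hX hS hA hY hS01 hA01 μ11 μ10 μ00 π g q
    hμ11 hμ10 hμ00 hπ hg hq ε M hε0 hM hbd hπbd
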